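/- arXiv:1111.1350 — 3 statements merged into one kernel-verified Lean document; each statement's English description precedes it below -/
import Mathlib

section
/- For x > 1, (2/π) ∫_{-1}^{1} log|x - t| · √(1 - t²) dt = x² - x·√(x² - 1) - log(2(x - √(x² - 1))) - 1/2. -/
/-!
Substituting `t = cos θ` turns the weight `√(1 - t²) dt` into `sin² θ dθ` on `[0, π]`.
With `b = x - √(x² - 1) ∈ (0, 1)` one has `2b (x - cos θ) = 1 - 2b cos θ + b²`, and
`log (1 - 2b cos θ + b²) = -2 ∑ bⁿ cos (nθ) / n`. Since `sin² θ = (1 - cos 2θ) / 2` is orthogonal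
on `[0, π]` to every `cos (nθ)` with `n ∉ {0, 2}`, only the term `n = 2` survives, giving `π b² / 4`.
-/

open Real Set

-- The `n = 0` term is `… / 0 = 0`.
theorem hasSum_log_one_sub_two_mul_cos_add_sq {b : ℝ} (hb : |b| < 1) (θ : ℝ) :
    HasSum (fun n : ℕ => -2 * b ^ n * cos (n * θ) / n) (log (1 - 2 * b * cos θ + b ^ 2)) := by
  set z : ℂ := b * Complex.exp (θ * Complex.I)
  have hz : ‖z‖ < 1 := by simpa [z] using hb
  have hre : ∀ n : ℕ, -2 * (z ^ n / n).re = -2 * b ^ n * cos (n * θ) / n := fun n => by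
    rw [mul_pow, ← Complex.exp_nat_mul, ← mul_assoc, ← Complex.ofReal_natCast,
      ← Complex.ofReal_mul, ← Complex.ofReal_pow, Complex.div_ofReal_re, Complex.re_ofReal_mul,
      Complex.exp_ofReal_mul_I_re]
    ring
  have hnorm : ‖1 - z‖ ^ 2 = 1 - 2 * b * cos θ + b ^ 2 := by
    rw [Complex.sq_norm, Complex.normSq_apply]
    simp only [z, Complex.sub_re, Complex.sub_im, Complex.one_re, Complex.one_im,
      Complex.re_ofReal_mul, Complex.im_ofReal_mul, Complex.exp_ofReal_mul_I_re,
      Complex.exp_ofReal_mul_I_im]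
    nlinarith [sin_sq_add_cos_sq θ]
  have hlog : -2 * (-Complex.log (1 - z)).re = log (1 - 2 * b * cos θ + b ^ 2) := by
    rw [Complex.neg_re, Complex.log_re, ← hnorm, log_pow]
    push_cast
    ring
  simpa only [Complex.reCLM_apply, hre, hlog] using
    (Complex.reCLM.hasSum (Complex.hasSum_taylorSeries_neg_log hz)).mul_left (-2)

theorem integral_cos_int_mul (k : ℤ) :
    ∫ θ in (0 : ℝ)..π, cos (k * θ) = if k = 0 then π else 0 := by
  split_ifs with hk
  · simp [hk]
  · rw [intervalIntegral.integral_comp_mul_left (fun θ => cos θ) (Int.cast_ne_zero.mpr hk),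
      integral_cos, sin_int_mul_pi]
    simp

theorem integral_cos_nat_mul_mul_sin_sq {n : ℕ} (hn : n ≠ 0) :
    ∫ θ in (0 : ℝ)..π, cos (n * θ) * sin θ ^ 2 = if n = 2 then -(π / 4) else 0 := by
  have hprod : ∀ θ : ℝ, cos (n * θ) * sin θ ^ 2 = cos ((n : ℤ) * θ) / 2
      - cos (((n + 2 : ℤ) : ℝ) * θ) / 4 - cos (((n - 2 : ℤ) : ℝ) * θ) / 4 := fun θ => by
    push_cast
    rw [add_mul, sub_mul, cos_add, cos_sub, sin_sq_eq_half_sub, cos_two_mul, cos_sq θ]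
    ring
  simp only [hprod]
  rw [intervalIntegral.integral_sub, intervalIntegral.integral_sub, intervalIntegral.integral_div,
    intervalIntegral.integral_div, intervalIntegral.integral_div, integral_cos_int_mul,
    integral_cos_int_mul, integral_cos_int_mul]
  · split_ifs <;> first | omega | linarith
  all_goals exact Continuous.intervalIntegrable (by fun_prop) _ _

theorem one_sub_two_mul_mul_cos_add_sq_pos {b : ℝ} (hb : |b| < 1) (θ : ℝ) :
    0 < 1 - 2 * b * cos θ + b ^ 2 := by
  have hcos : b * cos θ ≤ |b| := (le_abs_self _).trans <| by
    rw [abs_mul]; exact mul_le_of_le_one_right (abs_nonneg b) (abs_cos_le_one θ)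
  nlinarith [sq_abs b]

theorem integral_log_one_sub_two_mul_cos_add_sq_mul_sin_sq {b : ℝ} (hb : |b| < 1) :
    ∫ θ in (0 : ℝ)..π, log (1 - 2 * b * cos θ + b ^ 2) * sin θ ^ 2 = π * b ^ 2 / 4 := by
  set F : ℕ → ℝ → ℝ := fun n θ => -2 * b ^ n * cos (n * θ) / n * sin θ ^ 2
  have hF : ∀ θ, HasSum (fun n => F n θ) (log (1 - 2 * b * cos θ + b ^ 2) * sin θ ^ 2) :=
    fun θ => (hasSum_log_one_sub_two_mul_cos_add_sq hb θ).mul_right _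
  have hbound : ∀ n θ, ‖F n θ‖ ≤ 2 * |b| ^ n := fun n θ => by
    rcases Nat.eq_zero_or_pos n with rfl | hpos
    · simp [F]
    have hn : (1 : ℝ) ≤ n := Nat.one_le_cast.mpr hpos
    calc ‖F n θ‖ = 2 * |b| ^ n * |cos (n * θ)| / n * sin θ ^ 2 := by
          simp only [F, norm_mul, norm_div, norm_neg, norm_pow, Real.norm_eq_abs, Nat.abs_cast,
            abs_two, sq_abs]
      _ ≤ 2 * |b| ^ n * 1 / 1 * 1 := by
          gcongr
          exacts [abs_cos_le_one _, sin_sq_le_one θ]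
      _ = 2 * |b| ^ n := by ring
  have hsum := intervalIntegral.hasSum_integral_of_dominated_convergence
    (μ := MeasureTheory.volume) (a := 0) (b := π) (fun n _ => 2 * |b| ^ n)
    (fun n => Continuous.aestronglyMeasurable (by fun_prop))
    (fun n => .of_forall fun θ _ => hbound n θ)
    (.of_forall fun θ _ => (summable_geometric_of_lt_one (abs_nonneg b) hb).mul_left 2)
    intervalIntegrable_const (.of_forall fun θ _ => hF θ)
  have hterm : ∀ n, ∫ θ in (0 : ℝ)..π, F n θ = if n = 2 then π * b ^ 2 / 4 else 0 := fun n => by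
    rcases eq_or_ne n 0 with rfl | hn
    · simp [F]
    simp only [F, mul_div_right_comm _ (cos _), mul_assoc (-2 * b ^ n / n),
      intervalIntegral.integral_const_mul, integral_cos_nat_mul_mul_sin_sq hn]
    split_ifs with h2
    · subst h2; push_cast; ring
    · simp
  simp only [hterm] at hsum
  exact hsum.unique (hasSum_ite_eq 2 _)

theorem integral_mul_sqrt_one_sub_sq {f : ℝ → ℝ} (hf : ContinuousOn f (Icc (-1) 1)) :
    ∫ t in (-1 : ℝ)..1, f t * √(1 - t ^ 2) = ∫ θ in (0 : ℝ)..π, f (cos θ) * sin θ ^ 2 := by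
  have hcos : cos '' uIcc π 0 ⊆ Icc (-1) 1 := by
    rintro _ ⟨θ, -, rfl⟩
    exact ⟨neg_one_le_cos θ, cos_le_one θ⟩
  have hsub := intervalIntegral.integral_comp_mul_deriv'' (f' := fun θ => -sin θ)
    (g := fun t => f t * √(1 - t ^ 2)) continuous_cos.continuousOn
    (fun θ _ => (hasDerivAt_cos θ).hasDerivWithinAt) continuous_sin.neg.continuousOn
    ((hf.mul (by fun_prop : Continuous fun t : ℝ => √(1 - t ^ 2)).continuousOn).mono hcos)
  rw [cos_pi, cos_zero] at hsub
  rw [← hsub, intervalIntegral.integral_symm, ← intervalIntegral.integral_neg]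
  refine intervalIntegral.integral_congr fun θ hθ => ?_
  rw [uIcc_of_le pi_pos.le] at hθ
  simp only [Function.comp, ← sin_sq, sqrt_sq (sin_nonneg_of_nonneg_of_le_pi hθ.1 hθ.2)]
  ring

theorem integral_log_abs_sub_cos_mul_sin_sq {b x : ℝ} (hb0 : b ≠ 0) (hb1 : |b| < 1)
    (hx : 2 * b * x = 1 + b ^ 2) :
    ∫ θ in (0 : ℝ)..π, log |x - cos θ| * sin θ ^ 2 = π * b ^ 2 / 4 - π / 2 * log (2 * b) := by
  have hsplit : ∀ θ, log |x - cos θ| * sin θ ^ 2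
      = log (1 - 2 * b * cos θ + b ^ 2) * sin θ ^ 2 - log (2 * b) * sin θ ^ 2 := fun θ => by
    have hfac : 1 - 2 * b * cos θ + b ^ 2 = 2 * b * (x - cos θ) := by linear_combination -hx
    have hne : x - cos θ ≠ 0 := right_ne_zero_of_mul
      (hfac ▸ (one_sub_two_mul_mul_cos_add_sq_pos hb1 θ).ne')
    rw [log_abs, hfac, log_mul (by positivity) hne]
    ring
  simp only [hsplit]
  rw [intervalIntegral.integral_sub, integral_log_one_sub_two_mul_cos_add_sq_mul_sin_sq hb1,
    intervalIntegral.integral_const_mul, integral_sin_sq]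
  · rw [sin_zero, sin_pi]
    ring
  · have hq : Continuous fun θ => 1 - 2 * b * cos θ + b ^ 2 := by fun_prop
    exact ((hq.log fun θ => (one_sub_two_mul_mul_cos_add_sq_pos hb1 θ).ne').mul
      (by fun_prop)).intervalIntegrable _ _
  · exact Continuous.intervalIntegrable (by fun_prop) _ _

theorem stmt_0 (x : ℝ) (hx : 1 < x) :
    (2 / π) * ∫ t in (-1 : ℝ)..1, Real.log |x - t| * Real.sqrt (1 - t ^ 2) =
      x ^ 2 - x * Real.sqrt (x ^ 2 - 1)
        - Real.log (2 * (x - Real.sqrt (x ^ 2 - 1))) - 1 / 2 := by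
  set s := √(x ^ 2 - 1)
  have hs : s ^ 2 = x ^ 2 - 1 := sq_sqrt (by nlinarith)
  have hsx : s < x := by nlinarith [sqrt_nonneg (x ^ 2 - 1)]
  have hb1 : |x - s| < 1 := by
    rw [abs_of_pos (sub_pos.mpr hsx)]; nlinarith [sqrt_nonneg (x ^ 2 - 1)]
  have hcont : ContinuousOn (fun t => log |x - t|) (Icc (-1) 1) :=
    ContinuousOn.log (by fun_prop) fun t ht => abs_ne_zero.mpr (by linarith [ht.2])
  rw [integral_mul_sqrt_one_sub_sq hcont,
    integral_log_abs_sub_cos_mul_sin_sq (sub_pos.mpr hsx).ne' hb1 (by linear_combination -hs)]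
  field_simp
  linear_combination 4 * hs
end

section
/- For x > 1, (2/π) ∫_{-1}^{1} √(1 - t²)/(x - t) dt = 2x(1 - √(1 - 1/x²)). -/
/-!
For `x > 1` and `s = √(x² - 1)`, an antiderivative of `√(1 - t²) / (x - t)` on `[-1, 1]` is
`x · arcsin t + s · arcsin ((1 - x t) / (x - t)) - √(1 - t²)`. The Möbius map
`t ↦ (1 - x t) / (x - t)` swaps `-1` and `1`, so the integral over `[-1, 1]` is `π x - π s`,
and `s = x √(1 - 1/x²)`.
-/

open Real intervalIntegral

lemma one_sub_sq_moebius {x t : ℝ} (hxt : x ≠ t) :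
    1 - ((1 - x * t) / (x - t)) ^ 2 = (x ^ 2 - 1) * (1 - t ^ 2) / (x - t) ^ 2 := by
  have : x - t ≠ 0 := sub_ne_zero.mpr hxt
  field_simp
  ring

lemma sqrt_one_sub_sq_moebius {x t : ℝ} (hx : 1 ≤ x ^ 2) (ht : t < x) :
    √(1 - ((1 - x * t) / (x - t)) ^ 2) = √(x ^ 2 - 1) * √(1 - t ^ 2) / (x - t) := by
  rw [one_sub_sq_moebius ht.ne', sqrt_div' _ (sq_nonneg _), sqrt_sq (sub_pos.mpr ht).le,
    sqrt_mul (sub_nonneg.mpr hx)]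

lemma hasDerivAt_moebius {x t : ℝ} (hxt : x ≠ t) :
    HasDerivAt (fun t : ℝ ↦ (1 - x * t) / (x - t)) ((1 - x ^ 2) / (x - t) ^ 2) t := by
  have hnum : HasDerivAt (fun t : ℝ ↦ 1 - x * t) (-x) t := by
    simpa using ((hasDerivAt_id t).const_mul x).const_sub 1
  have hden : HasDerivAt (fun t : ℝ ↦ x - t) (-1) t := by
    simpa using (hasDerivAt_id t).const_sub x
  refine (hnum.fun_div hden (sub_ne_zero.mpr hxt)).congr_deriv ?_
  ring

lemma moebius_mem_Ioo {x t : ℝ} (hx : 1 < x) (ht : t ∈ Set.Ioo (-1 : ℝ) 1) :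
    (1 - x * t) / (x - t) ∈ Set.Ioo (-1 : ℝ) 1 := by
  obtain ⟨ht₁, ht₂⟩ := ht
  have hxt : 0 < x - t := by linarith
  constructor
  · rw [lt_div_iff₀ hxt]; nlinarith
  · rw [div_lt_iff₀ hxt]; nlinarith

noncomputable def semicirclePrimitive (x t : ℝ) : ℝ :=
  x * arcsin t + √(x ^ 2 - 1) * arcsin ((1 - x * t) / (x - t)) - √(1 - t ^ 2)

lemma continuousOn_semicirclePrimitive {x : ℝ} (hx : 1 < x) :
    ContinuousOn (semicirclePrimitive x) (Set.Icc (-1) 1) := by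
  have hden : ∀ t ∈ Set.Icc (-1 : ℝ) 1, x - t ≠ 0 := fun t ht ↦ by linarith [ht.2]
  unfold semicirclePrimitive
  fun_prop (disch := assumption)

lemma hasDerivAt_semicirclePrimitive {x t : ℝ} (hx : 1 < x) (ht : t ∈ Set.Ioo (-1 : ℝ) 1) :
    HasDerivAt (semicirclePrimitive x) (√(1 - t ^ 2) / (x - t)) t := by
  obtain ⟨ht₁, ht₂⟩ := ht
  have hxt : 0 < x - t := by linarith
  have hs : 0 < √(x ^ 2 - 1) := sqrt_pos.mpr (by nlinarith)
  have ha : 0 < √(1 - t ^ 2) := sqrt_pos.mpr (by nlinarith)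
  have ha2 : √(1 - t ^ 2) ^ 2 = 1 - t ^ 2 := sq_sqrt (by nlinarith)
  obtain ⟨hu₁, hu₂⟩ := moebius_mem_Ioo hx ⟨ht₁, ht₂⟩
  have hasin := hasDerivAt_arcsin ht₁.ne' ht₂.ne
  have hasin_moebius :=
    (hasDerivAt_arcsin hu₁.ne' hu₂.ne).comp t (hasDerivAt_moebius (sub_pos.mp hxt).ne')
  rw [sqrt_one_sub_sq_moebius (by nlinarith) (by linarith)] at hasin_moebius
  have hsqrt : HasDerivAt (fun t : ℝ ↦ √(1 - t ^ 2)) (-t / √(1 - t ^ 2)) t := by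
    convert ((hasDerivAt_pow 2 t).const_sub 1).sqrt (by nlinarith) using 1
    field_simp
    ring
  refine (((hasin.const_mul x).add (hasin_moebius.const_mul √(x ^ 2 - 1))).sub
    hsqrt).congr_deriv ?_
  field_simp
  linear_combination (-1 : ℝ) * ha2

lemma integral_sqrt_one_sub_sq_div_sub {x : ℝ} (hx : 1 < x) :
    ∫ t in (-1 : ℝ)..1, √(1 - t ^ 2) / (x - t) = π * x - π * √(x ^ 2 - 1) := by
  have hint :
      IntervalIntegrable (fun t ↦ √(1 - t ^ 2) / (x - t)) MeasureTheory.volume (-1) 1 := by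
    refine ContinuousOn.intervalIntegrable ?_
    rw [Set.uIcc_of_le (by norm_num)]
    exact ContinuousOn.div (by fun_prop) (by fun_prop) fun t ht ↦ by linarith [ht.2]
  rw [integral_eq_sub_of_hasDerivAt_of_le (by norm_num) (continuousOn_semicirclePrimitive hx)
    (fun t ht ↦ hasDerivAt_semicirclePrimitive hx ht) hint]
  have hminus : (1 - x * 1) / (x - 1) = -1 := by
    rw [div_eq_iff (by linarith)]; ring
  have hplus : (1 - x * -1) / (x - -1) = 1 := by
    rw [div_eq_iff (by linarith)]; ring
  simp only [semicirclePrimitive, hminus, hplus, arcsin_one, arcsin_neg_one]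
  norm_num
  ring

theorem stmt_2 (x : ℝ) (hx : 1 < x) :
    (2 / π) * ∫ t in (-1 : ℝ)..1, Real.sqrt (1 - t ^ 2) / (x - t) =
      2 * x * (1 - Real.sqrt (1 - 1 / x ^ 2)) := by
  have hx₀ : 0 < x := by linarith
  have hsqrt : √(x ^ 2 - 1) = x * √(1 - 1 / x ^ 2) := by
    rw [← sqrt_sq hx₀.le, ← sqrt_mul (sq_nonneg x), sqrt_sq hx₀.le]
    congr 1
    field_simp
  rw [integral_sqrt_one_sub_sq_div_sub hx, hsqrt]
  field_simp
end

section
/- For x > 1, at the stationary point y₋ = -(i/2)(x - √(x² - 1)) of f(y) = -2y² + log(x - i y), the value f(x, y₋) = x² - x√(x² - 1) - 1/2 + log((x + √(x² - 1))/2), and f''(y₋) = -8√(x² - 1)(x - √(x² - 1)), which is real and negative. -/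
open Complex

/-
Write s = √(x² - 1). The stationary point satisfies x - i y₋ = (x + s)/2, which is positive, so
the principal logarithm is the real one. Since (x - s)(x + s) = 1, every remaining quantity is a
polynomial in x and s, reduced with s² = x² - 1; negativity of f'' comes from 0 < s < x.
-/

lemma Real.sqrt_sq_sub_one_lt_self {x : ℝ} (hx : 0 < x) : √(x ^ 2 - 1) < x :=
  (Real.sqrt_lt' hx).2 (by linarith)

lemma Real.sqrt_sq_sub_one_pos {x : ℝ} (hx : 1 < x) : 0 < √(x ^ 2 - 1) :=
  Real.sqrt_pos.2 (by nlinarith)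

lemma Complex.ofReal_sub_I_mul_neg_I_div_two_mul (x s : ℝ) :
    (x : ℂ) - I * (-(I / 2) * ((x : ℂ) - s)) = (((x + s) / 2 : ℝ) : ℂ) := by
  push_cast
  linear_combination ((x : ℂ) - s) / 2 * I_sq

lemma Complex.neg_two_mul_neg_I_div_two_mul_sq (a : ℂ) :
    -2 * (-(I / 2) * a) ^ 2 = a ^ 2 / 2 := by
  linear_combination -a ^ 2 / 2 * I_sq

lemma sub_sq_div_two_of_sq_eq_sq_sub_one {x s : ℝ} (hs : s ^ 2 = x ^ 2 - 1) :
    (x - s) ^ 2 / 2 = x ^ 2 - x * s - 1 / 2 := by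
  linear_combination hs / 2

lemma neg_four_add_one_div_add_div_two_sq {x s : ℝ} (hs : s ^ 2 = x ^ 2 - 1) (hxs : x + s ≠ 0) :
    -4 + 1 / ((x + s) / 2) ^ 2 = -8 * s * (x - s) := by
  have hinv_sq : 1 / ((x + s) / 2) ^ 2 = 4 * (x - s) ^ 2 := by
    rw [div_eq_iff (by positivity)]
    linear_combination (x ^ 2 - s ^ 2 + 1) * hs
  rw [hinv_sq]
  linear_combination -4 * hs

theorem stmt_13 (x : ℝ) (hx : 1 < x)
    (y : ℂ) (hy : y = -(Complex.I / 2) * ((x : ℝ) - Real.sqrt (x ^ 2 - 1))) :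
    -2 * y ^ 2 + Complex.log ((x : ℂ) - Complex.I * y) =
        ((x ^ 2 - x * Real.sqrt (x ^ 2 - 1) - 1 / 2
          + Real.log ((x + Real.sqrt (x ^ 2 - 1)) / 2) : ℝ) : ℂ) ∧
      -4 + 1 / ((x : ℂ) - Complex.I * y) ^ 2 =
        ((-8 * Real.sqrt (x ^ 2 - 1) * (x - Real.sqrt (x ^ 2 - 1)) : ℝ) : ℂ) ∧
      (-8 * Real.sqrt (x ^ 2 - 1) * (x - Real.sqrt (x ^ 2 - 1)) : ℝ) < 0 := by
  set s := √(x ^ 2 - 1)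
  have hs : s ^ 2 = x ^ 2 - 1 := Real.sq_sqrt (by nlinarith)
  have hs_pos : 0 < s := Real.sqrt_sq_sub_one_pos hx
  have hs_lt : s < x := Real.sqrt_sq_sub_one_lt_self (by linarith)
  have hpoint : (x : ℂ) - I * y = (((x + s) / 2 : ℝ) : ℂ) := by
    rw [hy]; exact ofReal_sub_I_mul_neg_I_div_two_mul x s
  refine ⟨?_, ?_, by nlinarith⟩
  · rw [hpoint, ← ofReal_log (by linarith), hy, neg_two_mul_neg_I_div_two_mul_sq,
      ← sub_sq_div_two_of_sq_eq_sq_sub_one hs]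
    push_cast
    ring
  · rw [hpoint, ← neg_four_add_one_div_add_div_two_sq hs (by linarith)]
    push_cast
    ring
end
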